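/- Hoffman's exponential isomorphism: the map φ : T(V) → T(V) defined by φ(x_1...x_n) = Σ_{k=1}^{n} Σ_{i_1+...+i_k=n} (1/(i_1!...i_k!)) (x_1•...•x_{i_1})(x_{i_1+1}•...•x_{i_1+i_2})...(x_{n-i_k+1}•...•x_n) is a Hopf algebra isomorphism from (T(V), shuffle product, deconcatenation) to (T(V), quasi-shuffle product, deconcatenation), over a field of characteristic 0 and a commutative non-unital algebra V. -/

import Mathlib

open Finsupp TensorProduct

noncomputable section

variable (k : Type) [Field k] (V : Type)

/-- The free `k`-module on the set of words with letters in `V`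
(a model of the tensor module `T(V)`; pure tensors of elements of `V`
correspond to the basis vectors indexed by lists). -/
abbrev TW := List V →₀ k

variable {k V} in
/-- The basis vector of a word. -/
def sg (w : List V) : TW k V := Finsupp.single w 1

/-- Linear extension of a word-indexed family. -/
def ext1 (f : List V → TW k V) : TW k V →ₗ[k] TW k V :=
  Finsupp.lsum k fun w => LinearMap.toSpanSingleton k _ (f w)

/-- Bilinear extension of a map defined on pairs of words. -/
def ext2 (f : List V → List V → TW k V) : TW k V →ₗ[k] TW k V →ₗ[k] TW k V :=
  Finsupp.lsum k fun v => LinearMap.toSpanSingleton k _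
    (Finsupp.lsum k fun w => LinearMap.toSpanSingleton k (TW k V) (f v w))

variable (mul : V → V → V)

/-- Hoffman's quasi-shuffle product `⧢` on words:
`1 ⧢ w = w = w ⧢ 1` and `av ⧢ bw = a(v ⧢ bw) + b(av ⧢ w) + (a·b)(v ⧢ w)`. -/
def qshW : List V → List V → TW k V
  | [], w => sg w
  | a::v, [] => sg (a::v)
  | a::v, b::w =>
      (qshW v (b::w)).mapDomain (List.cons a) +
      (qshW (a::v) w).mapDomain (List.cons b) +
      (qshW v w).mapDomain (List.cons (mul a b))
  termination_by v w => v.length + w.length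

/-- Hoffman's half-product `av ≺ bw = a(v ⧢ bw)`, with `x ≺ 1 = x`, `1 ≺ x = 0`. -/
def precW : List V → List V → TW k V
  | [], _ => 0
  | a::v, w => (qshW k V mul v w).mapDomain (List.cons a)

/-- Hoffman's half-product `av ≻ bw = b(av ⧢ w)`, with `1 ≻ x = x`, `x ≻ 1 = 0`. -/
def succW : List V → List V → TW k V
  | _, [] => 0
  | v, b::w => (qshW k V mul v w).mapDomain (List.cons b)

/-- Hoffman's product `av • bw = (a·b)(v ⧢ w)`. -/
def bulW : List V → List V → TW k V
  | [], _ => 0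
  | _::_, [] => 0
  | a::v, b::w => (qshW k V mul v w).mapDomain (List.cons (mul a b))

def qshL : TW k V →ₗ[k] TW k V →ₗ[k] TW k V := ext2 k V (qshW k V mul)
def precL : TW k V →ₗ[k] TW k V →ₗ[k] TW k V := ext2 k V (precW k V mul)
def succL : TW k V →ₗ[k] TW k V →ₗ[k] TW k V := ext2 k V (succW k V mul)
def bulL : TW k V →ₗ[k] TW k V →ₗ[k] TW k V := ext2 k V (bulW k V mul)

/-- Deconcatenation coproduct on a word. -/
def delW (w : List V) : TW k V ⊗[k] TW k V :=
  ∑ i ∈ Finset.range (w.length + 1), sg (w.take i) ⊗ₜ[k] sg (w.drop i)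

/-- The deconcatenation coproduct, linearly extended. -/
def delL : TW k V →ₗ[k] TW k V ⊗[k] TW k V :=
  Finsupp.lsum k fun w => LinearMap.toSpanSingleton k _ (delW k V w)

/-- Reduced deconcatenation coproduct on a word. -/
def rdelW (w : List V) : TW k V ⊗[k] TW k V :=
  ∑ i ∈ Finset.Ioo 0 w.length, sg (w.take i) ⊗ₜ[k] sg (w.drop i)

/-- The reduced deconcatenation coproduct, linearly extended. -/
def rdelL : TW k V →ₗ[k] TW k V ⊗[k] TW k V :=
  Finsupp.lsum k fun w => LinearMap.toSpanSingleton k _ (rdelW k V w)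

/-- The augmentation ideal `T⁺(V)`: the span of the nonempty words. -/
def Tplus : Submodule k (TW k V) :=
  Submodule.span k {x | ∃ w : List V, w ≠ [] ∧ x = sg w}

/-- The shuffle product on words. -/
def shW : List V → List V → TW k V
  | [], w => sg w
  | a::v, [] => sg (a::v)
  | a::v, b::w =>
      (shW v (b::w)).mapDomain (List.cons a) +
      (shW (a::v) w).mapDomain (List.cons b)
  termination_by v w => v.length + w.length

def shL : TW k V →ₗ[k] TW k V →ₗ[k] TW k V := ext2 k V (shW k V)

variable [NonUnitalCommRing V] [Module k V]

/-- Product of a list of elements of `V`. -/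
def prodList : List V → V
  | [] => 0
  | a :: t => t.foldl (· * ·) a

/-- Hoffman's exponential on a word:
`φ(x₁…x_n) = Σ_k Σ_{i₁+⋯+i_k = n} (1/(i₁!⋯i_k!)) (x₁•⋯•x_{i₁})⋯(x_{n-i_k+1}•⋯•x_n)`. -/
def phiW (x : List V) : TW k V :=
  ∑ c : Composition x.length,
    (((c.blocks.map Nat.factorial).prod : ℕ) : k)⁻¹ •
      sg ((x.splitWrtComposition c).map (prodList V))

def phiL : TW k V →ₗ[k] TW k V := ext1 k V (phiW k V)


/-! ### Auxiliary development for Hoffman's exponential isomorphism -/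

section Aux

variable {k : Type} [Field k] {V : Type}

/-- `cons` as a linear map. -/
def cmapL (a : V) : TW k V →ₗ[k] TW k V := Finsupp.lmapDomain k k (List.cons a)

lemma cmapL_apply (a : V) (x : TW k V) : cmapL a x = x.mapDomain (List.cons a) := rfl

@[simp] lemma cmapL_sg (a : V) (w : List V) : cmapL a (sg w) = (sg (a :: w) : TW k V) := by
  simp [cmapL, sg, Finsupp.lmapDomain_apply, Finsupp.mapDomain_single]

@[simp] lemma ext1_sg (f : List V → TW k V) (w : List V) : ext1 k V f (sg w) = f w := by
  simp [ext1, sg]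

@[simp] lemma ext2_sg (f : List V → List V → TW k V) (v w : List V) :
    ext2 k V f (sg v) (sg w) = f v w := by
  simp [ext2, sg]

/-- Induction principle for `TW`. -/
lemma TW.induct {p : TW k V → Prop} (h0 : p 0)
    (hadd : ∀ x y, p x → p y → p (x + y))
    (hs : ∀ (c : k) (w : List V), p (c • sg w)) : ∀ x, p x := by
  intro x
  induction x using Finsupp.induction_linear with
  | zero => exact h0
  | add a b ha hb => exact hadd _ _ ha hb
  | single w c =>
      have : Finsupp.single w c = c • (sg w : TW k V) := by
        simp [sg, Finsupp.smul_single]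
      rw [this]; exact hs c w

end Aux

section Aux2

variable {k : Type} [Field k] {V : Type}

section Lists

variable [NonUnitalCommRing V]

lemma foldl_mul_mid (c b : V) (l1 l2 : List V) :
    List.foldl (· * ·) c (l1 ++ b :: l2) = List.foldl (· * ·) (c * b) (l1 ++ l2) := by
  induction l1 generalizing c with
  | nil => rfl
  | cons z l1 ih => simpa [mul_right_comm] using ih (c * z)

lemma prodList_cons (a : V) (l : List V) :
    prodList V (a :: l) = List.foldl (· * ·) a l := rfl

end Lists

section Sh

variable (m : V → V → V)

@[simp] lemma qshW_nil_left (w : List V) : qshW k V m [] w = sg w := by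
  rw [qshW]

@[simp] lemma qshW_nil_right (v : List V) : qshW k V m v [] = sg v := by
  cases v <;> rw [qshW]

lemma qshW_cons (a b : V) (v w : List V) :
    qshW k V m (a :: v) (b :: w) =
      cmapL a (qshW k V m v (b :: w)) + cmapL b (qshW k V m (a :: v) w) +
        cmapL (m a b) (qshW k V m v w) := by
  rw [qshW]; rfl

@[simp] lemma shW_nil_left (w : List V) : shW k V [] w = sg w := by
  rw [shW]

@[simp] lemma shW_nil_right (v : List V) : shW k V v [] = sg v := by
  cases v <;> rw [shW]

lemma shW_cons (a b : V) (v w : List V) :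
    shW k V (a :: v) (b :: w) =
      cmapL a (shW k V v (b :: w)) + cmapL b (shW k V (a :: v) w) := by
  rw [shW]; rfl

@[simp] lemma qshL_sg (v w : List V) : qshL k V m (sg v) (sg w) = qshW k V m v w :=
  ext2_sg _ _ _

@[simp] lemma shL_sg (v w : List V) : shL k V (sg v) (sg w) = shW k V v w :=
  ext2_sg _ _ _

@[simp] lemma qshL_nil_left (y : TW k V) : qshL k V m (sg []) y = y := by
  induction y using TW.induct with
  | h0 => simp
  | hadd x y hx hy => simp [hx, hy]
  | hs c w => simp [map_smul]

@[simp] lemma qshL_nil_right (x : TW k V) : qshL k V m x (sg []) = x := by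
  induction x using TW.induct with
  | h0 => simp
  | hadd x y hx hy => simp [map_add, hx, hy]
  | hs c w => simp [map_smul]

lemma qshL_cons (a b : V) (x y : TW k V) :
    qshL k V m (cmapL a x) (cmapL b y) =
      cmapL a (qshL k V m x (cmapL b y)) + cmapL b (qshL k V m (cmapL a x) y) +
        cmapL (m a b) (qshL k V m x y) := by
  induction x using TW.induct with
  | h0 => simp
  | hadd x₁ x₂ h₁ h₂ =>
      simp only [map_add, LinearMap.add_apply, h₁, h₂]
      abel
  | hs c v =>
      induction y using TW.induct with
      | h0 => simp
      | hadd y₁ y₂ h₁ h₂ =>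
          simp only [map_add, LinearMap.add_apply, map_smul, LinearMap.smul_apply] at h₁ h₂ ⊢
          rw [h₁, h₂]
          abel
      | hs d w =>
          simp only [map_smul, LinearMap.smul_apply, cmapL_sg, qshL_sg, qshW_cons]
          simp [map_add, smul_add]

end Sh

end Aux2


section CompAux

variable {k : Type} [Field k] {V : Type}

lemma comp_ext {n : ℕ} {c c' : Composition n} (h : c.blocks = c'.blocks) : c = c' := by
  cases c; cases c'; simpa using h

lemma headI_cons_tail {α : Type*} [Inhabited α] {l : List α} (h : l ≠ []) :
    l.headI :: l.tail = l := by
  cases l with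
  | nil => exact absurd rfl h
  | cons a t => rfl

lemma comp_blocks_ne_nil {n : ℕ} (c : Composition (n + 1)) : c.blocks ≠ [] := by
  intro h
  have := c.blocks_sum
  rw [h] at this
  simp at this

lemma comp_headI_pos {n : ℕ} (c : Composition (n + 1)) : 0 < c.blocks.headI := by
  apply c.blocks_pos
  have h := comp_blocks_ne_nil c
  cases hb : c.blocks with
  | nil => exact absurd hb h
  | cons a t => simp

lemma comp_headI_le {n : ℕ} (c : Composition (n + 1)) : c.blocks.headI ≤ n + 1 := by
  have h := comp_blocks_ne_nil c
  have hs := c.blocks_sum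
  cases hb : c.blocks with
  | nil => exact absurd hb h
  | cons a t =>
      rw [hb] at hs
      simp only [List.sum_cons] at hs
      simp only [hb, List.headI_cons]
      omega

/-- First-block decomposition of compositions of `n+1`. -/
def compEquiv (n : ℕ) : (Σ j : Fin (n + 1), Composition (n - j.1)) ≃ Composition (n + 1) where
  toFun s :=
    ⟨(s.1.1 + 1) :: s.2.blocks, by
      intro i hi
      rcases List.mem_cons.1 hi with h | h
      · omega
      · exact s.2.blocks_pos h, by
      simp only [List.sum_cons, s.2.blocks_sum]
      have := s.1.2
      omega⟩
  invFun c :=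
    ⟨⟨c.blocks.headI - 1, by have := comp_headI_le c; omega⟩,
      ⟨c.blocks.tail, fun hi => c.blocks_pos (List.mem_of_mem_tail hi), by
        have hs := c.blocks_sum
        have hne := comp_blocks_ne_nil c
        have hpos := comp_headI_pos c
        have hle := comp_headI_le c
        have : c.blocks.headI + c.blocks.tail.sum = n + 1 := by
          rw [← List.sum_cons, headI_cons_tail hne, hs]
        show c.blocks.tail.sum = n - (c.blocks.headI - 1)
        omega⟩⟩
  left_inv s := rfl
  right_inv c := by
    apply comp_ext
    simp only
    have hpos := comp_headI_pos c
    have : c.blocks.headI - 1 + 1 = c.blocks.headI := by omega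
    rw [this, headI_cons_tail (comp_blocks_ne_nil c)]

lemma compEquiv_blocks (n : ℕ) (j : Fin (n + 1)) (c : Composition (n - j.1)) :
    (compEquiv n ⟨j, c⟩).blocks = (j.1 + 1) :: c.blocks := rfl

lemma comp_sum_congr {M : Type*} [AddCommMonoid M] {m m' : ℕ} (h : m = m') (F : List ℕ → M) :
    ∑ c : Composition m, F c.blocks = ∑ c : Composition m', F c.blocks := by subst h; rfl

lemma sum_composition_succ {M : Type*} [AddCommMonoid M] (n : ℕ) (f : Composition (n + 1) → M) :
    ∑ c : Composition (n + 1), f c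
      = ∑ j : Fin (n + 1), ∑ c : Composition (n - j.1), f (compEquiv n ⟨j, c⟩) := by
  rw [← Equiv.sum_comp (compEquiv n) f]
  rw [← Finset.sum_sigma (Finset.univ : Finset (Fin (n+1))) (fun j => (Finset.univ : Finset (Composition (n - j.1)))) (fun s => f (compEquiv n s))]
  rfl

end CompAux


section PhiRec

variable {k : Type} [Field k] {V : Type} [NonUnitalCommRing V]

lemma comp_zero_blocks (c : Composition 0) : c.blocks = [] := by
  have hs := c.blocks_sum
  cases hb : c.blocks with
  | nil => rfl
  | cons a t =>
      exfalso
      have ha : 0 < a := c.blocks_pos (by rw [hb]; simp)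
      rw [hb] at hs
      simp only [List.sum_cons] at hs
      omega

instance : Unique (Composition 0) :=
  ⟨⟨Composition.ones 0⟩, fun c => comp_ext (by rw [comp_zero_blocks, comp_zero_blocks])⟩

lemma phi_nil : phiW k V [] = sg [] := by
  rw [phiW]
  simp only [List.length_nil]
  rw [Fintype.sum_unique]
  show ((((default : Composition 0).blocks.map Nat.factorial).prod : ℕ) : k)⁻¹ •
      sg ((List.splitWrtCompositionAux ([] : List V) (default : Composition 0).blocks).map
        (prodList V)) = sg []
  rw [comp_zero_blocks]
  simp [List.splitWrtCompositionAux]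

lemma phi_cons (x : V) (w : List V) :
    phiW k V (x :: w) = ∑ j ∈ Finset.range (w.length + 1),
      (((j + 1).factorial : ℕ) : k)⁻¹ •
        cmapL (List.foldl (· * ·) x (List.take j w)) (phiW k V (List.drop j w)) := by
  rw [phiW]
  simp only [List.length_cons]
  rw [sum_composition_succ w.length]
  rw [← Fin.sum_univ_eq_sum_range (fun j => (((j + 1).factorial : ℕ) : k)⁻¹ •
        cmapL (List.foldl (· * ·) x (List.take j w)) (phiW k V (List.drop j w))) (w.length + 1)]
  apply Finset.sum_congr rfl
  intro j _
  set F : List ℕ → TW k V := fun bs => (((bs.map Nat.factorial).prod : ℕ) : k)⁻¹ •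
      sg ((List.splitWrtCompositionAux (List.drop j.1 w) bs).map (prodList V)) with hF
  have hsplit : ∀ c : Composition (w.length - j.1),
      (x :: w).splitWrtComposition (compEquiv w.length ⟨j, c⟩)
        = (x :: List.take j.1 w) :: List.splitWrtCompositionAux (List.drop j.1 w) c.blocks := by
    intro c
    show List.splitWrtCompositionAux (x :: w) ((j.1 + 1) :: c.blocks) = _
    rw [List.splitWrtCompositionAux_cons]
    simp
  have key : ∀ c : Composition (w.length - j.1),
      ((((compEquiv w.length ⟨j, c⟩).blocks.map Nat.factorial).prod : ℕ) : k)⁻¹ •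
          sg (((x :: w).splitWrtComposition (compEquiv w.length ⟨j, c⟩)).map (prodList V))
        = (((j.1 + 1).factorial : ℕ) : k)⁻¹ •
            cmapL (List.foldl (· * ·) x (List.take j.1 w)) (F c.blocks) := by
    intro c
    rw [hsplit c, compEquiv_blocks, hF]
    simp only [List.map_cons, List.prod_cons, Nat.cast_mul, mul_inv, map_smul, cmapL_sg]
    rw [mul_smul]
    rfl
  rw [Finset.sum_congr rfl (fun c _ => key c), ← Finset.smul_sum, ← map_sum]
  have hphi : phiW k V (List.drop j.1 w) = ∑ c : Composition (w.length - j.1), F c.blocks := by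
    rw [phiW]
    exact comp_sum_congr (by rw [List.length_drop]) F
  rw [← hphi]

end PhiRec


section Chunk4

variable {k : Type} [Field k] {V : Type}

@[simp] lemma sg_support (w : List V) : (sg w : TW k V).support = {w} :=
  Finsupp.support_single_ne_zero _ one_ne_zero

lemma shW_length : ∀ (u v : List V), ∀ w ∈ (shW k V u v).support,
    w.length = u.length + v.length
  | [], v => by simp
  | a::u, [] => by simp
  | a::u, b::v => by
      haveI := Classical.decEq (List V)
      intro w hw
      rw [shW_cons] at hw
      have h1 := Finsupp.support_add hw
      rcases Finset.mem_union.1 h1 with h | h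
      · have h2 := Finsupp.mapDomain_support h
        rcases Finset.mem_image.1 h2 with ⟨w', hw', rfl⟩
        have := shW_length u (b::v) w' hw'
        simp at this ⊢
        omega
      · have h2 := Finsupp.mapDomain_support h
        rcases Finset.mem_image.1 h2 with ⟨w', hw', rfl⟩
        have := shW_length (a::u) v w' hw'
        simp at this ⊢
        omega
  termination_by u v => u.length + v.length

@[simp] lemma phiL_sg [NonUnitalCommRing V] (w : List V) :
    phiL k V (sg w) = phiW k V w := ext1_sg _ _

variable [NonUnitalCommRing V]

/-- Collapse the first `j+1` letters (with carry `x`) and apply `φ` to the rest. -/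
def FL (x : V) (j : ℕ) : TW k V →ₗ[k] TW k V :=
  ext1 k V fun w => cmapL (List.foldl (· * ·) x (List.take j w)) (phiW k V (List.drop j w))

@[simp] lemma FL_sg (x : V) (j : ℕ) (w : List V) :
    FL x j (sg w) = (cmapL (List.foldl (· * ·) x (List.take j w)) (phiW k V (List.drop j w)) :
      TW k V) := ext1_sg _ _

lemma FL_zero (x : V) (X : TW k V) : FL x 0 X = cmapL x (phiL k V X) := by
  induction X using TW.induct with
  | h0 => simp
  | hadd a b ha hb => simp [map_add, ha, hb]
  | hs c w => simp [map_smul]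

lemma FL_cmap (x a : V) (j : ℕ) (X : TW k V) :
    FL x (j + 1) (cmapL a X) = FL (x * a) j X := by
  induction X using TW.induct with
  | h0 => simp
  | hadd p q hp hq => simp [map_add, hp, hq]
  | hs c w => simp [map_smul]

lemma phi_cons' (x : V) (w : List V) :
    phiW k V (x :: w) = ∑ j ∈ Finset.range (w.length + 1),
      (((j + 1).factorial : ℕ) : k)⁻¹ • FL x j (sg w) := by
  rw [phi_cons]
  exact Finset.sum_congr rfl fun j _ => by rw [FL_sg]

lemma phiL_cmapL (x : V) (X : TW k V) (n : ℕ) (hX : ∀ w ∈ X.support, w.length = n) :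
    phiL k V (cmapL x X) = ∑ j ∈ Finset.range (n + 1),
      (((j + 1).factorial : ℕ) : k)⁻¹ • FL x j X := by
  have hX' : X = ∑ w ∈ X.support, X w • sg w := by
    conv_lhs => rw [← Finsupp.sum_single X]
    rw [Finsupp.sum]
    exact Finset.sum_congr rfl fun w _ => by simp [sg, Finsupp.smul_single]
  conv_lhs => rw [hX']
  conv_rhs => rw [hX']
  simp only [map_sum, map_smul, Finset.smul_sum]
  conv_rhs => rw [Finset.sum_comm]
  apply Finset.sum_congr rfl
  intro w hw
  rw [cmapL_sg, phiL_sg, phi_cons', hX w hw, Finset.smul_sum]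
  exact Finset.sum_congr rfl fun j _ => smul_comm _ _ _

end Chunk4


section Chunk5

variable {k : Type} [Field k] {V : Type}

lemma mul_foldl [NonUnitalCommRing V] (x y : V) (l : List V) :
    List.foldl (· * ·) (x * y) l = x * List.foldl (· * ·) y l := by
  induction l generalizing y with
  | nil => rfl
  | cons z t ih =>
      simp only [List.foldl_cons]
      rw [mul_assoc]
      exact ih (y * z)

lemma foldl_mul_append [NonUnitalCommRing V] (x y : V) (l1 l2 : List V) :
    List.foldl (· * ·) x (l1 ++ y :: l2) =
      List.foldl (· * ·) x l1 * List.foldl (· * ·) y l2 := by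
  rw [List.foldl_append]
  simp only [List.foldl_cons]
  exact mul_foldl _ _ _

lemma pc {M : Type*} [AddCommMonoid M] (G : ℕ → ℕ → M) (j m n : ℕ) :
    ((∑ p ∈ Finset.range m, ∑ q ∈ Finset.range (n + 1),
        if p + q = j then (j.choose p) • G (p + 1) q else 0)
      + ∑ p ∈ Finset.range (m + 1), ∑ q ∈ Finset.range n,
        if p + q = j then (j.choose p) • G p (q + 1) else 0)
      = ∑ p ∈ Finset.range (m + 1), ∑ q ∈ Finset.range (n + 1),
        if p + q = j + 1 then ((j + 1).choose p) • G p q else 0 := by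
  conv_rhs => rw [Finset.sum_range_succ']
  have hA : (∑ p ∈ Finset.range m, ∑ q ∈ Finset.range (n + 1),
      if p + 1 + q = j + 1 then ((j + 1).choose (p + 1)) • G (p + 1) q else 0)
      = (∑ p ∈ Finset.range m, ∑ q ∈ Finset.range (n + 1),
          if p + q = j then (j.choose p) • G (p + 1) q else 0)
        + ∑ p ∈ Finset.range m, ∑ q ∈ Finset.range (n + 1),
          if p + q = j then (j.choose (p + 1)) • G (p + 1) q else 0 := by
    rw [← Finset.sum_add_distrib]
    refine Finset.sum_congr rfl fun p _ => ?_
    rw [← Finset.sum_add_distrib]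
    refine Finset.sum_congr rfl fun q _ => ?_
    by_cases h : p + q = j
    · rw [if_pos (by omega), if_pos h, if_pos h, Nat.choose_succ_succ, add_smul]
    · rw [if_neg (by omega), if_neg h, if_neg h, add_zero]
  rw [hA, add_assoc]
  congr 1
  -- remaining: second A-part + peeled p=0 term = LHS second double sum
  rw [Finset.sum_range_succ']
  -- RHS now: (∑ p ∈ range m, ∑ q ∈ range n, ite ((p+1)+q = j) (choose j (p+1) • G (p+1) (q+1)) 0) + (∑ q ∈ range n, ite (0 + q = j) (choose j 0 • G 0 (q+1)) 0)
  congr 1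
  · refine Finset.sum_congr rfl fun p _ => ?_
    rw [Finset.sum_range_succ']
    have h0 : (if p + 0 = j then (j.choose (p + 1)) • G (p + 1) 0 else 0) = 0 := by
      by_cases h : p + 0 = j
      · rw [if_pos h]
        have : j.choose (p + 1) = 0 := by
          have : p = j := by omega
          rw [this]
          exact Nat.choose_succ_self j
        rw [this, zero_smul]
      · rw [if_neg h]
    rw [h0, add_zero]
    refine Finset.sum_congr rfl fun q _ => ?_
    by_cases h : p + 1 + q = j
    · rw [if_pos h, if_pos (show p + (q + 1) = j by omega)]
    · rw [if_neg h, if_neg (show ¬p + (q + 1) = j by omega)]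
  · rw [Finset.sum_range_succ']
    have h0 : (if 0 + 0 = j + 1 then ((j + 1).choose 0) • G 0 0 else 0) = 0 := by
      rw [if_neg (by omega)]
    rw [h0, add_zero]
    refine Finset.sum_congr rfl fun q _ => ?_
    by_cases h : 0 + q = j
    · rw [if_pos h, if_pos (show 0 + (q + 1) = j + 1 by omega), Nat.choose_zero_right,
        Nat.choose_zero_right]
    · rw [if_neg h, if_neg (show ¬0 + (q + 1) = j + 1 by omega)]

lemma coeff_eq [CharZero k] {M : Type*} [AddCommMonoid M] [Module k M] (p q : ℕ) (X : M) :
    (((p + q).factorial : ℕ) : k)⁻¹ • (((p + q).choose p) • X)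
      = ((p.factorial * q.factorial : ℕ) : k)⁻¹ • X := by
  rw [← Nat.cast_smul_eq_nsmul k ((p + q).choose p) X, smul_smul]
  congr 1
  have h : ((p + q).choose p * (p.factorial * q.factorial) : ℕ) = (p + q).factorial := by
    rw [Nat.choose_symm_add, ← Nat.add_choose_mul_factorial_mul_factorial p q]; ring
  have hC : (((p + q).choose p : ℕ) : k) ≠ 0 :=
    Nat.cast_ne_zero.2 (Nat.choose_pos (Nat.le_add_right p q)).ne'
  have key : (((p + q).choose p : ℕ) : k) * ((p.factorial * q.factorial : ℕ) : k)
      = (((p + q).factorial : ℕ) : k) := by exact_mod_cast h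
  rw [← key, mul_inv, mul_comm ((((p + q).choose p : ℕ) : k))⁻¹, mul_assoc,
    inv_mul_cancel₀ hC, mul_one]

lemma inner_eval [CharZero k] {M : Type*} [AddCommMonoid M] [Module k M]
    (N p q : ℕ) (hpq : p + q ≤ N) (X : M) :
    (∑ j ∈ Finset.range N, (((j + 1).factorial : ℕ) : k)⁻¹ •
        (if p + q = j + 1 then ((j + 1).choose p) • X else 0))
      = if p + q = 0 then 0 else ((p.factorial * q.factorial : ℕ) : k)⁻¹ • X := by
  by_cases h : p + q = 0
  · rw [if_pos h]
    apply Finset.sum_eq_zero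
    intro j _
    rw [h, if_neg (by omega), smul_zero]
  · rw [if_neg h]
    rw [Finset.sum_eq_single (p + q - 1)]
    · rw [if_pos (by omega)]
      have hr : p + q - 1 + 1 = p + q := by omega
      rw [hr]
      exact coeff_eq p q X
    · intro j _ hj
      rw [if_neg (by omega), smul_zero]
    · intro hnot
      exact absurd (Finset.mem_range.2 (by omega)) hnot

end Chunk5


section ChunkAC

variable {k : Type} [Field k] {V : Type} [NonUnitalCommRing V]

lemma AC : ∀ (j : ℕ) (c : V) (u v : List V), j ≤ u.length + v.length →
    FL c j (shW k V u v)
      = ∑ p ∈ Finset.range (u.length + 1), ∑ q ∈ Finset.range (v.length + 1),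
          if p + q = j then (j.choose p) •
            (cmapL (List.foldl (· * ·) c (List.take p u ++ List.take q v))
              (phiL k V (shW k V (List.drop p u) (List.drop q v))) : TW k V)
          else 0 := by
  intro j
  induction j with
  | zero =>
      intro c u v _
      rw [FL_zero]
      rw [Finset.sum_eq_single 0]
      · rw [Finset.sum_eq_single 0]
        · simp
        · intro q _ hq
          rw [if_neg (by omega)]
        · intro hnot
          exact absurd (Finset.mem_range.2 (by omega)) hnot
      · intro p _ hp
        apply Finset.sum_eq_zero
        intro q _
        rw [if_neg (by omega)]
      · intro hnot
        exact absurd (Finset.mem_range.2 (by omega)) hnot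
  | succ j ih =>
      intro c u v h
      match u, v with
      | [], v =>
          rw [shW_nil_left, FL_sg]
          simp only [List.length_nil] at h ⊢
          rw [Finset.sum_eq_single 0]
          · rw [Finset.sum_eq_single (j + 1)]
            · rw [if_pos (by omega), Nat.choose_zero_right, one_smul]
              simp
            · intro q _ hq
              rw [if_neg (by omega)]
            · intro hnot
              exact absurd (Finset.mem_range.2 (by omega)) hnot
          · intro p hp hne
            have hp' := Finset.mem_range.1 hp
            exact absurd (by omega) hne
          · intro hnot
            exact absurd (Finset.mem_range.2 (by omega)) hnot
      | a::u, [] =>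
          rw [shW_nil_right, FL_sg]
          simp only [List.length_nil, List.length_cons] at h ⊢
          rw [Finset.sum_eq_single (j + 1)]
          · rw [Finset.sum_eq_single 0]
            · rw [if_pos (by omega), Nat.choose_self, one_smul]
              simp
            · intro q hq hne
              have hq' := Finset.mem_range.1 hq
              exact absurd (by omega) hne
            · intro hnot
              exact absurd (Finset.mem_range.2 (by omega)) hnot
          · intro p _ hp
            apply Finset.sum_eq_zero
            intro q hq
            have hq' := Finset.mem_range.1 hq
            rw [if_neg (by omega)]
          · intro hnot
            exact absurd (Finset.mem_range.2 (by omega)) hnot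
      | a::u, b::v =>
          rw [shW_cons, map_add, FL_cmap, FL_cmap]
          have hu : j ≤ u.length + (b::v).length := by
            simp only [List.length_cons] at h ⊢
            omega
          have hv : j ≤ (a::u).length + v.length := by
            simp only [List.length_cons] at h ⊢
            omega
          rw [ih (c * a) u (b::v) hu, ih (c * b) (a::u) v hv]
          simp only [List.length_cons]
          have e1 : (∑ p ∈ Finset.range (u.length + 1), ∑ q ∈ Finset.range (v.length + 1 + 1),
              if p + q = j then (j.choose p) •
                (cmapL (List.foldl (· * ·) (c * a) (List.take p u ++ List.take q (b::v)))
                  (phiL k V (shW k V (List.drop p u) (List.drop q (b::v)))) : TW k V)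
              else 0)
              = ∑ p ∈ Finset.range (u.length + 1), ∑ q ∈ Finset.range (v.length + 1 + 1),
                if p + q = j then (j.choose p) •
                  (cmapL (List.foldl (· * ·) c
                      (List.take (p + 1) (a::u) ++ List.take q (b::v)))
                    (phiL k V (shW k V (List.drop (p + 1) (a::u)) (List.drop q (b::v)))) : TW k V)
                else 0 := by
            refine Finset.sum_congr rfl fun p _ => Finset.sum_congr rfl fun q _ => ?_
            simp only [List.take_succ_cons, List.drop_succ_cons, List.cons_append,
              List.foldl_cons]
          have e2 : (∑ p ∈ Finset.range (u.length + 1 + 1), ∑ q ∈ Finset.range (v.length + 1),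
              if p + q = j then (j.choose p) •
                (cmapL (List.foldl (· * ·) (c * b) (List.take p (a::u) ++ List.take q v))
                  (phiL k V (shW k V (List.drop p (a::u)) (List.drop q v))) : TW k V)
              else 0)
              = ∑ p ∈ Finset.range (u.length + 1 + 1), ∑ q ∈ Finset.range (v.length + 1),
                if p + q = j then (j.choose p) •
                  (cmapL (List.foldl (· * ·) c
                      (List.take p (a::u) ++ List.take (q + 1) (b::v)))
                    (phiL k V (shW k V (List.drop p (a::u)) (List.drop (q + 1) (b::v)))) : TW k V)
                else 0 := by
            refine Finset.sum_congr rfl fun p _ => Finset.sum_congr rfl fun q _ => ?_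
            rw [List.take_succ_cons, List.drop_succ_cons, foldl_mul_mid]
          rw [e1, e2]
          exact pc (fun p q =>
            (cmapL (List.foldl (· * ·) c (List.take p (a::u) ++ List.take q (b::v)))
              (phiL k V (shW k V (List.drop p (a::u)) (List.drop q (b::v)))) : TW k V))
            j (u.length + 1) (v.length + 1)

end ChunkAC


section ChunkA

variable {k : Type} [Field k] {V : Type} [NonUnitalCommRing V]

lemma prodList_append_cons (y : V) (l1 l2 : List V) :
    prodList V (l1 ++ y :: l2) = List.foldl (· * ·) y (l1 ++ l2) := by
  cases l1 with
  | nil => rfl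
  | cons z l1 =>
      show prodList V (z :: (l1 ++ y :: l2)) = _
      rw [prodList_cons, foldl_mul_mid]
      show List.foldl (· * ·) (z * y) (l1 ++ l2) = List.foldl (· * ·) (y * z) (l1 ++ l2)
      rw [mul_comm]

lemma Aprime [CharZero k] (u v : List V) (hne : ¬(u = [] ∧ v = [])) :
    phiL k V (shW k V u v)
      = ∑ p ∈ Finset.range (u.length + 1), ∑ q ∈ Finset.range (v.length + 1),
          if p + q = 0 then 0 else
            ((p.factorial * q.factorial : ℕ) : k)⁻¹ •
              (cmapL (prodList V (List.take p u ++ List.take q v))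
                (phiL k V (shW k V (List.drop p u) (List.drop q v))) : TW k V) := by
  match u, v with
  | [], [] => exact absurd ⟨rfl, rfl⟩ hne
  | [], y::v' =>
      rw [shW_nil_left, phiL_sg, phi_cons]
      simp only [List.length_nil, List.length_cons, zero_add]
      conv_rhs => rw [Finset.sum_range_one, Finset.sum_range_succ']
      rw [if_pos (by omega : 0 + 0 = 0), add_zero]
      apply Finset.sum_congr rfl
      intro q _
      rw [if_neg (by omega)]
      simp only [List.take_zero, List.drop_zero, List.take_succ_cons, List.drop_succ_cons,
        List.nil_append, Nat.factorial_zero, one_mul, shW_nil_left, phiL_sg, prodList_cons]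
  | x::u', [] =>
      rw [shW_nil_right, phiL_sg, phi_cons]
      simp only [List.length_nil, List.length_cons, zero_add]
      have h1 : (∑ p ∈ Finset.range (u'.length + 1 + 1), ∑ q ∈ Finset.range 1,
          if p + q = 0 then (0 : TW k V) else
            ((p.factorial * q.factorial : ℕ) : k)⁻¹ •
              (cmapL (prodList V (List.take p (x::u') ++ List.take q ([] : List V)))
                (phiL k V (shW k V (List.drop p (x::u')) (List.drop q ([] : List V)))) : TW k V))
          = ∑ p ∈ Finset.range (u'.length + 1 + 1),
            if p + 0 = 0 then (0 : TW k V) else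
              ((p.factorial * Nat.factorial 0 : ℕ) : k)⁻¹ •
                (cmapL (prodList V (List.take p (x::u') ++ List.take 0 ([] : List V)))
                  (phiL k V (shW k V (List.drop p (x::u')) (List.drop 0 ([] : List V)))) :
                    TW k V) :=
        Finset.sum_congr rfl fun p _ => by rw [Finset.sum_range_one]
      rw [h1]
      conv_rhs => rw [Finset.sum_range_succ']
      rw [if_pos (by omega : 0 + 0 = 0), add_zero]
      apply Finset.sum_congr rfl
      intro p _
      rw [if_neg (by omega)]
      simp only [List.take_zero, List.drop_zero, List.take_succ_cons, List.drop_succ_cons,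
        List.append_nil, Nat.factorial_zero, mul_one, shW_nil_right, phiL_sg, prodList_cons,
        List.take_nil, List.drop_nil]
  | x::u', y::v' =>
      rw [shW_cons, map_add]
      rw [phiL_cmapL x _ (u'.length + (y::v').length) (shW_length u' (y::v')),
          phiL_cmapL y _ ((x::u').length + v'.length) (shW_length (x::u') v')]
      simp only [List.length_cons]
      rw [show u'.length + 1 + v'.length + 1 = u'.length + (v'.length + 1) + 1 by omega]
      rw [← Finset.sum_add_distrib]
      set G : ℕ → ℕ → TW k V := fun p q =>
        cmapL (prodList V (List.take p (x::u') ++ List.take q (y::v')))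
          (phiL k V (shW k V (List.drop p (x::u')) (List.drop q (y::v')))) with hG
      have step : ∀ j ∈ Finset.range (u'.length + (v'.length + 1) + 1),
          (((j + 1).factorial : ℕ) : k)⁻¹ • FL x j (shW k V u' (y::v'))
            + (((j + 1).factorial : ℕ) : k)⁻¹ • FL y j (shW k V (x::u') v')
          = (((j + 1).factorial : ℕ) : k)⁻¹ •
              ∑ p ∈ Finset.range (u'.length + 1 + 1), ∑ q ∈ Finset.range (v'.length + 1 + 1),
                if p + q = j + 1 then ((j + 1).choose p) • G p q else 0 := by
        intro j hj
        have hj' := Finset.mem_range.1 hj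
        rw [← smul_add]
        congr 1
        rw [AC j x u' (y::v') (by simp only [List.length_cons]; omega),
            AC j y (x::u') v' (by simp only [List.length_cons]; omega)]
        simp only [List.length_cons]
        have e1 : (∑ p ∈ Finset.range (u'.length + 1), ∑ q ∈ Finset.range (v'.length + 1 + 1),
            if p + q = j then (j.choose p) •
              (cmapL (List.foldl (· * ·) x (List.take p u' ++ List.take q (y::v')))
                (phiL k V (shW k V (List.drop p u') (List.drop q (y::v')))) : TW k V)
            else 0)
            = ∑ p ∈ Finset.range (u'.length + 1), ∑ q ∈ Finset.range (v'.length + 1 + 1),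
                if p + q = j then (j.choose p) • G (p + 1) q else 0 := by
          refine Finset.sum_congr rfl fun p _ => Finset.sum_congr rfl fun q _ => ?_
          simp only [hG, List.take_succ_cons, List.drop_succ_cons, List.cons_append,
            prodList_cons, List.foldl_cons]
        have e2 : (∑ p ∈ Finset.range (u'.length + 1 + 1), ∑ q ∈ Finset.range (v'.length + 1),
            if p + q = j then (j.choose p) •
              (cmapL (List.foldl (· * ·) y (List.take p (x::u') ++ List.take q v'))
                (phiL k V (shW k V (List.drop p (x::u')) (List.drop q v'))) : TW k V)
            else 0)
            = ∑ p ∈ Finset.range (u'.length + 1 + 1), ∑ q ∈ Finset.range (v'.length + 1),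
                if p + q = j then (j.choose p) • G p (q + 1) else 0 := by
          refine Finset.sum_congr rfl fun p _ => Finset.sum_congr rfl fun q _ => ?_
          simp only [hG, List.take_succ_cons, List.drop_succ_cons, prodList_append_cons]
        rw [e1, e2]
        exact pc G j (u'.length + 1) (v'.length + 1)
      rw [Finset.sum_congr rfl step]
      simp only [Finset.smul_sum]
      rw [Finset.sum_comm]
      apply Finset.sum_congr rfl
      intro p hp
      rw [Finset.sum_comm]
      apply Finset.sum_congr rfl
      intro q hq
      have hp' := Finset.mem_range.1 hp
      have hq' := Finset.mem_range.1 hq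
      exact inner_eval (u'.length + (v'.length + 1) + 1) p q (by omega) (G p q)

end ChunkA


section ChunkB

variable {k : Type} [Field k] {V : Type} [NonUnitalCommRing V]

lemma reassemble0 (f : TW k V →ₗ[k] TW k V) (s : Finset ℕ) (d : ℕ → k) (Z : ℕ → TW k V) :
    ∑ q ∈ s, d q • f (Z q) = f (∑ q ∈ s, d q • Z q) := by
  rw [map_sum]
  exact Finset.sum_congr rfl fun q _ => (map_smul f (d q) (Z q)).symm

attribute [local irreducible] phiW phiL qshL shL cmapL FL prodList ext1 ext2 sg

set_option maxHeartbeats 1000000 in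
lemma Bprime [CharZero k] (u v : List V) (hne : ¬(u = [] ∧ v = [])) :
    qshL k V (· * ·) (phiW k V u) (phiW k V v)
      = ∑ p ∈ Finset.range (u.length + 1), ∑ q ∈ Finset.range (v.length + 1),
          if p + q = 0 then 0 else
            ((p.factorial * q.factorial : ℕ) : k)⁻¹ •
              (cmapL (prodList V (List.take p u ++ List.take q v))
                (qshL k V (· * ·) (phiW k V (List.drop p u)) (phiW k V (List.drop q v))) :
                  TW k V) := by
  match u, v with
  | [], [] => exact absurd ⟨rfl, rfl⟩ hne
  | [], y::v' =>
      rw [phi_nil, qshL_nil_left, phi_cons]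
      simp only [List.length_nil, List.length_cons, zero_add]
      conv_rhs => rw [Finset.sum_range_one, Finset.sum_range_succ']
      rw [if_pos (by omega : 0 + 0 = 0), add_zero]
      apply Finset.sum_congr rfl
      intro q _
      rw [if_neg (by omega)]
      simp only [List.take_zero, List.drop_zero, List.take_succ_cons, List.drop_succ_cons,
        List.nil_append, Nat.factorial_zero, one_mul, phi_nil, qshL_nil_left, prodList_cons]
  | x::u', [] =>
      rw [phi_nil, qshL_nil_right, phi_cons]
      simp only [List.length_nil, List.length_cons, zero_add]
      have h1 : (∑ p ∈ Finset.range (u'.length + 1 + 1), ∑ q ∈ Finset.range 1,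
          if p + q = 0 then (0 : TW k V) else
            ((p.factorial * q.factorial : ℕ) : k)⁻¹ •
              (cmapL (prodList V (List.take p (x::u') ++ List.take q ([] : List V)))
                (qshL k V (· * ·) (phiW k V (List.drop p (x::u')))
                  (phiW k V (List.drop q ([] : List V)))) : TW k V))
          = ∑ p ∈ Finset.range (u'.length + 1 + 1),
            if p + 0 = 0 then (0 : TW k V) else
              ((p.factorial * Nat.factorial 0 : ℕ) : k)⁻¹ •
                (cmapL (prodList V (List.take p (x::u') ++ List.take 0 ([] : List V)))
                  (qshL k V (· * ·) (phiW k V (List.drop p (x::u')))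
                    (phiW k V (List.drop 0 ([] : List V)))) : TW k V) :=
        Finset.sum_congr rfl fun p _ => by rw [Finset.sum_range_one]
      rw [h1]
      conv_rhs => rw [Finset.sum_range_succ']
      rw [if_pos (by omega : 0 + 0 = 0), add_zero]
      apply Finset.sum_congr rfl
      intro p _
      rw [if_neg (by omega)]
      simp only [List.take_zero, List.drop_zero, List.take_succ_cons, List.drop_succ_cons,
        List.append_nil, Nat.factorial_zero, mul_one, phi_nil, qshL_nil_right, prodList_cons,
        List.take_nil, List.drop_nil]
  | x::u', y::v' =>
      rw [phi_cons x u', phi_cons y v']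
      simp only [map_sum, map_smul, LinearMap.sum_apply, LinearMap.smul_apply]
      simp only [qshL_cons, smul_add, Finset.sum_add_distrib]
      simp only [List.length_cons]
      have hS1 : (∑ q ∈ Finset.range (v'.length + 1), (((q + 1).factorial : ℕ) : k)⁻¹ •
            ∑ p ∈ Finset.range (u'.length + 1), (((p + 1).factorial : ℕ) : k)⁻¹ •
              (cmapL (List.foldl (· * ·) x (List.take p u'))
                ((qshL k V (· * ·) (phiW k V (List.drop p u')))
                  ((cmapL (List.foldl (· * ·) y (List.take q v')))
                    (phiW k V (List.drop q v')))) : TW k V))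
          = ∑ p ∈ Finset.range (u'.length + 1), (((p + 1).factorial : ℕ) : k)⁻¹ •
              (cmapL (List.foldl (· * ·) x (List.take p u'))
                (qshL k V (· * ·) (phiW k V (List.drop p u')) (phiW k V (y::v'))) : TW k V) := by
        simp only [Finset.smul_sum]
        rw [Finset.sum_comm]
        apply Finset.sum_congr rfl
        intro p _
        have h := reassemble0 ((((p + 1).factorial : ℕ) : k)⁻¹ •
            ((cmapL (List.foldl (· * ·) x (List.take p u'))) ∘ₗ
              (qshL k V (· * ·) (phiW k V (List.drop p u')))))
            (Finset.range (v'.length + 1)) (fun q => (((q + 1).factorial : ℕ) : k)⁻¹)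
            (fun q => (cmapL (List.foldl (· * ·) y (List.take q v')))
              (phiW k V (List.drop q v')))
        simp only [LinearMap.smul_apply, LinearMap.comp_apply] at h
        rw [h, ← phi_cons y v']
      have hS2 : (∑ q ∈ Finset.range (v'.length + 1), (((q + 1).factorial : ℕ) : k)⁻¹ •
            ∑ p ∈ Finset.range (u'.length + 1), (((p + 1).factorial : ℕ) : k)⁻¹ •
              (cmapL (List.foldl (· * ·) y (List.take q v'))
                ((qshL k V (· * ·)
                    ((cmapL (List.foldl (· * ·) x (List.take p u')))
                      (phiW k V (List.drop p u'))))
                  (phiW k V (List.drop q v'))) : TW k V))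
          = ∑ q ∈ Finset.range (v'.length + 1), (((q + 1).factorial : ℕ) : k)⁻¹ •
              (cmapL (List.foldl (· * ·) y (List.take q v'))
                (qshL k V (· * ·) (phiW k V (x::u')) (phiW k V (List.drop q v'))) : TW k V) := by
        apply Finset.sum_congr rfl
        intro q _
        refine congrArg (fun z : TW k V => (((q + 1).factorial : ℕ) : k)⁻¹ • z) ?_
        have h := reassemble0 ((cmapL (List.foldl (· * ·) y (List.take q v'))) ∘ₗ
            ((qshL k V (· * ·)).flip (phiW k V (List.drop q v'))))
            (Finset.range (u'.length + 1)) (fun p => (((p + 1).factorial : ℕ) : k)⁻¹)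
            (fun p => (cmapL (List.foldl (· * ·) x (List.take p u')))
              (phiW k V (List.drop p u')))
        simp only [LinearMap.comp_apply, LinearMap.flip_apply] at h
        rw [h, ← phi_cons x u']
      rw [hS1, hS2]
      conv_rhs => rw [Finset.sum_range_succ']
      have hf0 : (∑ q ∈ Finset.range (v'.length + 1 + 1),
          if 0 + q = 0 then (0 : TW k V) else
            ((Nat.factorial 0 * q.factorial : ℕ) : k)⁻¹ •
              (cmapL (prodList V (List.take 0 (x::u') ++ List.take q (y::v')))
                (qshL k V (· * ·) (phiW k V (List.drop 0 (x::u')))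
                  (phiW k V (List.drop q (y::v')))) : TW k V))
          = ∑ q ∈ Finset.range (v'.length + 1), (((q + 1).factorial : ℕ) : k)⁻¹ •
              (cmapL (List.foldl (· * ·) y (List.take q v'))
                (qshL k V (· * ·) (phiW k V (x::u')) (phiW k V (List.drop q v'))) : TW k V) := by
        rw [Finset.sum_range_succ']
        rw [if_pos (by omega : 0 + 0 = 0), add_zero]
        apply Finset.sum_congr rfl
        intro q _
        rw [if_neg (by omega)]
        simp only [Nat.factorial_zero, one_mul, List.take_zero, List.take_succ_cons,
          List.drop_succ_cons, List.drop_zero, List.nil_append, prodList_cons]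
      have hfS : ∀ p ∈ Finset.range (u'.length + 1), (∑ q ∈ Finset.range (v'.length + 1 + 1),
          if (p + 1) + q = 0 then (0 : TW k V) else
            (((p + 1).factorial * q.factorial : ℕ) : k)⁻¹ •
              (cmapL (prodList V (List.take (p + 1) (x::u') ++ List.take q (y::v')))
                (qshL k V (· * ·) (phiW k V (List.drop (p + 1) (x::u')))
                  (phiW k V (List.drop q (y::v')))) : TW k V))
          = (∑ q ∈ Finset.range (v'.length + 1), (((q + 1).factorial : ℕ) : k)⁻¹ •
              ((((p + 1).factorial : ℕ) : k)⁻¹ •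
                (cmapL (List.foldl (· * ·) x (List.take p u') *
                    List.foldl (· * ·) y (List.take q v'))
                  (qshL k V (· * ·) (phiW k V (List.drop p u'))
                    (phiW k V (List.drop q v'))) : TW k V)))
            + (((p + 1).factorial : ℕ) : k)⁻¹ •
              (cmapL (List.foldl (· * ·) x (List.take p u'))
                (qshL k V (· * ·) (phiW k V (List.drop p u')) (phiW k V (y::v'))) : TW k V) := by
        intro p _
        rw [Finset.sum_range_succ']
        congr 1
        · apply Finset.sum_congr rfl
          intro q _
          rw [if_neg (by omega)]
          simp only [List.take_succ_cons, List.drop_succ_cons, List.cons_append,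
            prodList_cons, foldl_mul_append, Nat.cast_mul, mul_inv]
          rw [mul_comm ((((p + 1).factorial : ℕ) : k))⁻¹, mul_smul]
        · rw [if_neg (by omega)]
          simp only [Nat.factorial_zero, mul_one, List.take_zero, List.take_succ_cons,
            List.drop_succ_cons, List.drop_zero, List.append_nil, prodList_cons]
      rw [Finset.sum_congr rfl hfS, Finset.sum_add_distrib, hf0]
      simp only [Finset.smul_sum]
      rw [Finset.sum_comm]
      rw [add_comm, ← add_assoc]

end ChunkB


section ChunkMain2

variable {k : Type} [Field k] {V : Type} [NonUnitalCommRing V]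

attribute [local irreducible] phiW phiL qshL shL cmapL FL prodList ext1 ext2 sg

lemma main2W [CharZero k] : ∀ (N : ℕ) (u v : List V), u.length + v.length ≤ N →
    phiL k V (shW k V u v) = qshL k V (· * ·) (phiW k V u) (phiW k V v) := by
  intro N
  induction N with
  | zero =>
      intro u v h
      match u, v with
      | [], [] => rw [shW_nil_left, phiL_sg, phi_nil, qshL_nil_left]
      | a::u, v => simp [List.length_cons] at h
      | [], b::v => simp [List.length_cons] at h
  | succ N ih =>
      intro u v h
      by_cases hc : u = [] ∧ v = []
      · obtain ⟨rfl, rfl⟩ := hc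
        rw [shW_nil_left, phiL_sg, phi_nil, qshL_nil_left]
      · rw [Aprime u v hc, Bprime u v hc]
        apply Finset.sum_congr rfl
        intro p hp
        apply Finset.sum_congr rfl
        intro q hq
        by_cases h0 : p + q = 0
        · rw [if_pos h0, if_pos h0]
        · rw [if_neg h0, if_neg h0]
          have hp' := Finset.mem_range.1 hp
          have hq' := Finset.mem_range.1 hq
          congr 1
          congr 1
          apply ih
          have h1 : (List.drop p u).length = u.length - p := List.length_drop
          have h2 : (List.drop q v).length = v.length - q := List.length_drop
          omega

lemma part2 [CharZero k] (x y : TW k V) :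
    phiL k V (shL k V x y) = qshL k V (· * ·) (phiL k V x) (phiL k V y) := by
  induction x using TW.induct with
  | h0 => simp
  | hadd a b ha hb => simp only [map_add, LinearMap.add_apply] at ha hb ⊢; rw [ha, hb]
  | hs c u =>
      induction y using TW.induct with
      | h0 => simp
      | hadd a b ha hb => simp only [map_add, map_smul, LinearMap.add_apply,
          LinearMap.smul_apply] at ha hb ⊢; rw [ha, hb]
      | hs d w =>
          simp only [map_smul, LinearMap.smul_apply, shL_sg, phiL_sg]
          rw [main2W (u.length + w.length) u w le_rfl]

end ChunkMain2


section ChunkDel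

variable {k : Type} [Field k] {V : Type}

@[simp] lemma delL_sg (w : List V) : delL k V (sg w) = delW k V w := by
  simp [delL, sg]

lemma delW_cons (z : V) (w : List V) :
    delW k V (z :: w) = sg [] ⊗ₜ[k] sg (z :: w)
      + (TensorProduct.map (cmapL z) (LinearMap.id : TW k V →ₗ[k] TW k V)) (delW k V w) := by
  rw [delW, delW]
  simp only [List.length_cons]
  rw [Finset.sum_range_succ', map_sum]
  rw [add_comm]
  refine congrArg₂ (· + ·) rfl ?_
  apply Finset.sum_congr rfl
  intro i _
  rw [TensorProduct.map_tmul, cmapL_sg]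
  simp [List.take_succ_cons, List.drop_succ_cons]

lemma delL_cmapL (z : V) (X : TW k V) :
    delL k V (cmapL z X) = sg [] ⊗ₜ[k] (cmapL z X)
      + (TensorProduct.map (cmapL z) (LinearMap.id : TW k V →ₗ[k] TW k V)) (delL k V X) := by
  induction X using TW.induct with
  | h0 => simp
  | hadd a b ha hb =>
      simp only [map_add, ha, hb, TensorProduct.tmul_add]
      exact add_add_add_comm _ _ _ _
  | hs c v =>
      simp only [map_smul, delL_sg, cmapL_sg, delW_cons, TensorProduct.tmul_smul,
        smul_add]

lemma triangle {M : Type*} [AddCommMonoid M] :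
    ∀ (n : ℕ) (F : ℕ → ℕ → M),
    ∑ I ∈ Finset.range (n + 1), ∑ j ∈ Finset.range (I + 1), F j I
      = ∑ j ∈ Finset.range (n + 1), ∑ i ∈ Finset.range (n - j + 1), F j (j + i) := by
  intro n
  induction n with
  | zero => intro F; simp
  | succ n ih =>
      intro F
      rw [Finset.sum_range_succ, ih F]
      conv_rhs => rw [Finset.sum_range_succ]
      have h1 : ∀ j ∈ Finset.range (n + 1),
          (∑ i ∈ Finset.range (n + 1 - j + 1), F j (j + i))
            = (∑ i ∈ Finset.range (n - j + 1), F j (j + i)) + F j (n + 1) := by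
        intro j hj
        have hj' := Finset.mem_range.1 hj
        have h2 : n + 1 - j + 1 = (n - j + 1) + 1 := by omega
        rw [h2, Finset.sum_range_succ]
        congr 2
        omega
      rw [Finset.sum_congr rfl h1, Finset.sum_add_distrib]
      have h3 : (∑ i ∈ Finset.range (n + 1 - (n + 1) + 1), F (n + 1) (n + 1 + i))
          = F (n + 1) (n + 1) := by
        simp
      rw [h3]
      have h4 : (∑ j ∈ Finset.range (n + 1 + 1), F j (n + 1))
          = ∑ j ∈ Finset.range (n + 1), F j (n + 1) + F (n + 1) (n + 1) :=
        Finset.sum_range_succ _ _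
      rw [h4, ← add_assoc]

end ChunkDel

section ChunkPart3

variable {k : Type} [Field k] {V : Type} [NonUnitalCommRing V]

attribute [local irreducible] phiW phiL qshL shL cmapL FL prodList ext1 ext2 sg delL delW

lemma part3W : ∀ (N : ℕ) (w : List V), w.length ≤ N →
    delL k V (phiW k V w) = ∑ i ∈ Finset.range (w.length + 1),
      phiW k V (List.take i w) ⊗ₜ[k] phiW k V (List.drop i w) := by
  intro N
  induction N with
  | zero =>
      intro w h
      match w with
      | [] => rw [phi_nil, delL_sg]; rw [delW]; simp [phi_nil]
      | a::w => simp at h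
  | succ N ih =>
      intro w h
      match w with
      | [] => rw [phi_nil, delL_sg]; rw [delW]; simp [phi_nil]
      | x::w' =>
          simp only [List.length_cons] at h ⊢
          rw [phi_cons x w', map_sum]
          have step : ∀ j ∈ Finset.range (w'.length + 1),
              delL k V ((((j + 1).factorial : ℕ) : k)⁻¹ •
                cmapL (List.foldl (· * ·) x (List.take j w')) (phiW k V (List.drop j w')))
              = (((j + 1).factorial : ℕ) : k)⁻¹ •
                  (sg [] ⊗ₜ[k] cmapL (List.foldl (· * ·) x (List.take j w'))
                    (phiW k V (List.drop j w')))
                + (((j + 1).factorial : ℕ) : k)⁻¹ •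
                  ∑ i ∈ Finset.range ((List.drop j w').length + 1),
                    (cmapL (List.foldl (· * ·) x (List.take j w'))
                      (phiW k V (List.take i (List.drop j w'))))
                      ⊗ₜ[k] phiW k V (List.drop i (List.drop j w')) := by
            intro j hj
            have hj' := Finset.mem_range.1 hj
            rw [map_smul, delL_cmapL, smul_add]
            congr 1
            rw [ih (List.drop j w') (by
              have : (List.drop j w').length = w'.length - j := List.length_drop
              omega)]
            rw [map_sum, Finset.smul_sum, Finset.smul_sum]
            apply Finset.sum_congr rfl
            intro i _
            rw [TensorProduct.map_tmul]
            rfl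
          rw [Finset.sum_congr rfl step, Finset.sum_add_distrib]
          -- first part reassembles to sg [] ⊗ phiW (x::w')
          have hfirst : (∑ j ∈ Finset.range (w'.length + 1),
              (((j + 1).factorial : ℕ) : k)⁻¹ •
                ((sg [] : TW k V) ⊗ₜ[k] cmapL (List.foldl (· * ·) x (List.take j w'))
                  (phiW k V (List.drop j w'))))
              = (sg [] : TW k V) ⊗ₜ[k] phiW k V (x :: w') := by
            rw [phi_cons x w', TensorProduct.tmul_sum]
            apply Finset.sum_congr rfl
            intro j _
            rw [TensorProduct.tmul_smul]
          rw [hfirst]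
          conv_rhs => rw [Finset.sum_range_succ']
          rw [add_comm]
          refine congrArg₂ (· + ·) ?_ (by simp [phi_nil])
          simp only [Finset.smul_sum]
          have hR : ∀ I ∈ Finset.range (w'.length + 1),
              phiW k V (List.take (I + 1) (x::w')) ⊗ₜ[k] phiW k V (List.drop (I + 1) (x::w'))
              = ∑ j ∈ Finset.range (I + 1), (((j + 1).factorial : ℕ) : k)⁻¹ •
                  (cmapL (List.foldl (· * ·) x (List.take j w'))
                    (phiW k V (List.take (I - j) (List.drop j w'))) ⊗ₜ[k]
                    phiW k V (List.drop I w')) := by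
            intro I hI
            have hI' := Finset.mem_range.1 hI
            rw [List.take_succ_cons, List.drop_succ_cons, phi_cons x (List.take I w')]
            rw [TensorProduct.sum_tmul]
            have hlen : (List.take I w').length = I := by
              rw [List.length_take]
              omega
            rw [hlen]
            apply Finset.sum_congr rfl
            intro j hj
            have hj' := Finset.mem_range.1 hj
            rw [TensorProduct.smul_tmul']
            rw [List.take_take, min_eq_left (by omega : j ≤ I), List.drop_take]
          rw [Finset.sum_congr rfl hR]
          rw [triangle w'.length]
          apply Finset.sum_congr rfl
          intro j hj
          have hlen2 : (List.drop j w').length = w'.length - j := List.length_drop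
          rw [hlen2]
          apply Finset.sum_congr rfl
          intro i _
          rw [List.drop_drop, show j + i - j = i from by omega]

lemma part3 [NonUnitalCommRing V] (x : TW k V) :
    delL k V (phiL k V x) = TensorProduct.map (phiL k V) (phiL k V) (delL k V x) := by
  induction x using TW.induct with
  | h0 => simp
  | hadd a b ha hb => simp only [map_add, ha, hb]
  | hs c w =>
      simp only [map_smul, phiL_sg, delL_sg]
      congr 1
      rw [part3W w.length w le_rfl]
      rw [delW, map_sum]
      apply Finset.sum_congr rfl
      intro i _
      rw [TensorProduct.map_tmul, phiL_sg, phiL_sg]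

end ChunkPart3


section ChunkBij

variable {k : Type} [Field k] {V : Type} [NonUnitalCommRing V]

lemma split_ones_map : ∀ w : List V,
    (List.splitWrtCompositionAux w (List.replicate w.length 1)).map (prodList V) = w := by
  intro w
  induction w with
  | nil => rfl
  | cons a t ih =>
      show (List.splitWrtCompositionAux (a :: t) (1 :: List.replicate t.length 1)).map
        (prodList V) = a :: t
      rw [List.splitWrtCompositionAux_cons, List.map_cons]
      show prodList V (List.take 1 (a :: t)) ::
        List.map (prodList V) ((List.drop 1 (a :: t)).splitWrtCompositionAux
          (List.replicate t.length 1)) = a :: t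
      have h1 : List.take 1 (a :: t) = [a] := rfl
      have h2 : List.drop 1 (a :: t) = t := rfl
      rw [h1, h2, ih]
      rfl

lemma TW_eq_sum (X : TW k V) : X = ∑ w ∈ X.support, X w • (sg w : TW k V) := by
  conv_lhs => rw [← Finsupp.sum_single X]
  rw [Finsupp.sum]
  exact Finset.sum_congr rfl fun w _ => by simp [sg, Finsupp.smul_single]

lemma phiL_eq (X : TW k V) : phiL k V X = ∑ w ∈ X.support, X w • phiW k V w := by
  conv_lhs => rw [TW_eq_sum X]
  rw [map_sum]
  exact Finset.sum_congr rfl fun w _ => by rw [map_smul, phiL_sg]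

lemma phiW_apply (w w₀ : List V) (h : w.length ≤ w₀.length) :
    phiW k V w w₀ = (sg w : TW k V) w₀ := by
  rw [phiW, Finsupp.finset_sum_apply]
  rw [Finset.sum_eq_single (Composition.ones w.length)]
  · rw [Finsupp.smul_apply]
    have hb : (Composition.ones w.length).blocks = List.replicate w.length 1 :=
      Composition.ones_blocks _
    have hsplit : ((w.splitWrtComposition (Composition.ones w.length)).map (prodList V)) = w := by
      show (List.splitWrtCompositionAux w (Composition.ones w.length).blocks).map
        (prodList V) = w
      rw [hb]
      exact split_ones_map w
    rw [hsplit, hb]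
    simp
  · intro c _ hc
    rw [Finsupp.smul_apply]
    have hz : (sg (((w.splitWrtComposition c)).map (prodList V)) : TW k V) w₀ = 0 := by
      rw [sg]
      apply Finsupp.single_eq_of_ne'
      intro heq
      have hlen : ((w.splitWrtComposition c).map (prodList V)).length = c.length := by
        rw [List.length_map, List.length_splitWrtComposition]
      have hle : c.length ≤ w.length := c.length_le
      have heq2 : c.length = w.length := by
        rw [heq] at hlen
        omega
      exact hc (Composition.eq_ones_iff_length.2 heq2)
    rw [hz, smul_zero]
  · intro hno
    exact absurd (Finset.mem_univ _) hno

lemma phiL_apply_top (X : TW k V) (w₀ : List V)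
    (h : ∀ w ∈ X.support, w.length ≤ w₀.length) : phiL k V X w₀ = X w₀ := by
  rw [phiL_eq X, Finsupp.finset_sum_apply]
  have hc : ∀ w ∈ X.support, (X w • phiW k V w) w₀ = (X w • (sg w : TW k V)) w₀ :=
    fun w hw => by rw [Finsupp.smul_apply, Finsupp.smul_apply, phiW_apply w w₀ (h w hw)]
  rw [Finset.sum_congr rfl hc]
  rw [Finset.sum_eq_single w₀]
  · rw [Finsupp.smul_apply, sg, Finsupp.single_eq_same, smul_eq_mul, mul_one]
  · intro w _ hne
    rw [Finsupp.smul_apply, sg, Finsupp.single_eq_of_ne' hne, smul_zero]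
  · intro hno
    rw [Finsupp.smul_apply, sg, Finsupp.single_eq_same, smul_eq_mul, mul_one]
    exact Finsupp.notMem_support_iff.1 hno

lemma phiL_injective : Function.Injective (phiL k V) := by
  refine (injective_iff_map_eq_zero _).2 ?_
  intro x hx
  by_contra hne
  obtain ⟨w₀, hw₀mem, hmax⟩ := Finset.exists_max_image x.support (fun w => w.length)
    (Finsupp.support_nonempty_iff.2 hne)
  have h1 : phiL k V x w₀ = x w₀ := phiL_apply_top x w₀ (fun w hw => hmax w hw)
  rw [hx] at h1
  simp only [Finsupp.coe_zero, Pi.zero_apply] at h1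
  exact (Finsupp.mem_support_iff.1 hw₀mem) h1.symm

lemma phiL_surjective : Function.Surjective (phiL k V) := by
  have H : ∀ (n : ℕ) (y : TW k V), (∀ w ∈ y.support, w.length ≤ n) →
      ∃ x, phiL k V x = y := by
    intro n
    induction n with
    | zero =>
        intro y hy
        refine ⟨y, ?_⟩
        rw [phiL_eq]
        conv_rhs => rw [TW_eq_sum y]
        apply Finset.sum_congr rfl
        intro w hw
        have hw0 : w = [] := List.length_eq_zero_iff.1 (Nat.le_zero.1 (hy w hw))
        subst hw0
        rw [phi_nil]
    | succ n ih =>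
        intro y hy
        classical
        set y1 : TW k V := y.filter (fun w => w.length = n + 1) with hy1def
        have hy1s : ∀ w ∈ y1.support, w.length = n + 1 := by
          intro w hw
          rw [hy1def, Finsupp.support_filter] at hw
          exact (Finset.mem_filter.1 hw).2
        have hkey : ∀ w₀ : List V, n + 1 ≤ w₀.length → (y - phiL k V y1) w₀ = 0 := by
          intro w₀ hw₀
          rw [Finsupp.sub_apply]
          have h2 : phiL k V y1 w₀ = y1 w₀ :=
            phiL_apply_top y1 w₀ (fun w hw => by rw [hy1s w hw]; exact hw₀)
          rw [h2]
          by_cases hc : w₀.length = n + 1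
          · rw [hy1def, Finsupp.filter_apply_pos (p := fun w : List V => w.length = n + 1) (f := y) (a := w₀) hc]
            exact sub_self _
          · have hy0 : y w₀ = 0 := by
              by_contra h0
              have := hy w₀ (Finsupp.mem_support_iff.2 h0)
              omega
            have hy10 : y1 w₀ = 0 := by
              rw [hy1def, Finsupp.filter_apply_neg (p := fun w : List V => w.length = n + 1) (f := y) (a := w₀) hc]
            rw [hy0, hy10, sub_self]
        obtain ⟨x', hx'⟩ := ih (y - phiL k V y1) (fun w hw => by
          by_contra hlen
          push_neg at hlen
          exact (Finsupp.mem_support_iff.1 hw) (hkey w (by omega)))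
        refine ⟨x' + y1, ?_⟩
        rw [map_add, hx']
        abel
  intro y
  exact H (y.support.sup (fun w => w.length)) y (fun w hw => Finset.le_sup hw)

end ChunkBij

/-- Hoffman's exponential isomorphism: over a field of characteristic zero and a
commutative non-unital algebra `V`, `φ` is a Hopf algebra isomorphism from
`(T(V), shuffle, deconcatenation)` to `(T(V), quasi-shuffle, deconcatenation)`. -/
theorem hoffman_exponential_iso [CharZero k] :
    Function.Bijective (phiL k V) ∧
    (∀ x y : TW k V, phiL k V (shL k V x y)
        = qshL k V (· * ·) (phiL k V x) (phiL k V y)) ∧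
    (∀ x : TW k V, delL k V (phiL k V x)
        = TensorProduct.map (phiL k V) (phiL k V) (delL k V x)) :=
  ⟨⟨phiL_injective, phiL_surjective⟩, fun x y => part2 x y, fun x => part3 x⟩
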